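/- Let M > 0 and α, β ∈ {−1, +1}, and define R(U, V) := 2M·κ( α·β·exp((−α·U + β·V)/(4M)) ) at all points (U, V) where α·β·exp((−α·U + β·V)/(4M)) > −1. Then at every such point R is differentiable, R > 0, and the partial derivatives satisfy ∂R/∂V = (β/2)·(1 − 2M/R) and ∂R/∂U = −(α/2)·(1 − 2M/R). -/

import Mathlib

/-! The radius is `R = 2M κ(a eˢ)` with `a = αβ` and `s = (-αU + βV)/(4M)` affine in `(U, V)`.
Differentiating `f (κ z) = z` gives `κ' z = (κ z · e^{κ z})⁻¹`, and since `a eˢ = (κ - 1) e^κ`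
along the curve, `d/ds κ(a eˢ) = 1 - 1/κ = 1 - 2M/R`; the chain rule through `s` supplies the
factors `β/(4M)` and `-α/(4M)`. -/

/-- `f x = (x - 1) * exp x`; in the paper this is `κ⁻¹`. -/
noncomputable def f (x : ℝ) : ℝ := (x - 1) * Real.exp x

/-- The Kruskal function `κ`, the inverse of the restriction of `f` to `(0, ∞)`. -/
noncomputable def kappa (z : ℝ) : ℝ := Function.invFunOn f (Set.Ioi 0) z

open Real Set

lemma hasStrictDerivAt_f (x : ℝ) : HasStrictDerivAt f (x * exp x) x := by
  have h := HasStrictDerivAt.mul ((hasStrictDerivAt_id x).sub_const 1) (hasStrictDerivAt_exp x)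
  exact h.congr_deriv (by simp only [id]; ring)

lemma continuous_f : Continuous f := by
  unfold f
  fun_prop

lemma strictMonoOn_f : StrictMonoOn f (Ici 0) := by
  refine strictMonoOn_of_deriv_pos (convex_Ici 0) continuous_f.continuousOn fun x hx => ?_
  rw [interior_Ici] at hx
  rw [(hasStrictDerivAt_f x).hasDerivAt.deriv]
  exact mul_pos hx (exp_pos x)

lemma exists_pos_f_eq {z : ℝ} (hz : -1 < z) : ∃ x ∈ Ioi (0 : ℝ), f x = z := by
  have hf_top : z ≤ f (z + 2) := by
    have : z + 1 ≤ f (z + 2) := by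
      rw [f, show z + 2 - 1 = z + 1 by ring]
      exact le_mul_of_one_le_right (by linarith) (one_le_exp (by linarith))
    linarith
  obtain ⟨x, hx, hfx⟩ := intermediate_value_Ioc (show (0 : ℝ) ≤ z + 2 by linarith)
    continuous_f.continuousOn ⟨by simpa [f] using hz, hf_top⟩
  exact ⟨x, hx.1, hfx⟩

lemma kappa_pos {z : ℝ} (hz : -1 < z) : 0 < kappa z :=
  Function.invFunOn_mem (exists_pos_f_eq hz)

lemma f_kappa {z : ℝ} (hz : -1 < z) : f (kappa z) = z :=
  Function.invFunOn_eq (exists_pos_f_eq hz)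

lemma kappa_f {x : ℝ} (hx : 0 < x) : kappa (f x) = x :=
  have hfx : ∃ y ∈ Ioi (0 : ℝ), f y = f x := ⟨x, hx, rfl⟩
  strictMonoOn_f.injOn (le_of_lt (Function.invFunOn_mem hfx)) hx.le (Function.invFunOn_eq hfx)

lemma hasStrictDerivAt_kappa {z : ℝ} (hz : -1 < z) :
    HasStrictDerivAt kappa (kappa z * exp (kappa z))⁻¹ z := by
  have hx := kappa_pos hz
  have hleft : ∀ᶠ y in nhds (kappa z), kappa (f y) = y := by
    filter_upwards [isOpen_Ioi.mem_nhds hx] with y hy using kappa_f hy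
  simpa only [f_kappa hz] using
    (hasStrictDerivAt_f (kappa z)).to_local_left_inverse (mul_pos hx (exp_pos _)).ne' hleft

lemma hasDerivAt_kappa_mul_exp {a s : ℝ} (h : -1 < a * exp s) :
    HasDerivAt (fun t => kappa (a * exp t)) (1 - (kappa (a * exp s))⁻¹) s := by
  have hx := kappa_pos h
  refine ((hasStrictDerivAt_kappa h).hasDerivAt.comp s ((hasDerivAt_exp s).const_mul a)).congr_deriv ?_
  set x := kappa (a * exp s)
  have hfx : (x - 1) * exp x = a * exp s := f_kappa h
  rw [← hfx]
  field_simp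

theorem DNEF_radius_partial_derivatives_general (M α β : ℝ)
    (hM : M > 0)
    (R : ℝ → ℝ → ℝ)
    (hRdef : ∀ u v : ℝ,
      R u v = 2 * M * kappa (α * β * Real.exp ((-α * u + β * v) / (4 * M))))
    (U V : ℝ)
    (hdom : α * β * Real.exp ((-α * U + β * V) / (4 * M)) > -1) :
    DifferentiableAt ℝ (fun p : ℝ × ℝ => R p.1 p.2) (U, V) ∧
    R U V > 0 ∧
    HasDerivAt (fun v => R U v) (β / 2 * (1 - 2 * M / R U V)) V ∧
    HasDerivAt (fun u => R u V) (-(α / 2) * (1 - 2 * M / R U V)) U := by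
  have hK := hasDerivAt_kappa_mul_exp hdom
  have hκ := kappa_pos hdom
  simp only [hRdef]
  refine ⟨?_, by positivity, ?_, ?_⟩
  · have hs : DifferentiableAt ℝ (fun p : ℝ × ℝ => (-α * p.1 + β * p.2) / (4 * M)) (U, V) := by
      fun_prop
    exact (hK.differentiableAt.comp (U, V) hs).const_mul (2 * M)
  · have hs : HasDerivAt (fun v => (-α * U + β * v) / (4 * M)) (β / (4 * M)) V := by
      simpa using (((hasDerivAt_id V).const_mul β).const_add (-α * U)).div_const (4 * M)
    refine ((hK.comp V hs).const_mul (2 * M)).congr_deriv ?_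
    field_simp
    ring
  · have hs : HasDerivAt (fun u => (-α * u + β * V) / (4 * M)) (-α / (4 * M)) U := by
      simpa using (((hasDerivAt_id U).const_mul (-α)).add_const (β * V)).div_const (4 * M)
    refine ((hK.comp U hs).const_mul (2 * M)).congr_deriv ?_
    field_simp
    ring

theorem DNEF_radius_partial_derivatives (M α β : ℝ)
    (hM : M > 0) (hα : α = -1 ∨ α = 1) (hβ : β = -1 ∨ β = 1)
    (R : ℝ → ℝ → ℝ)
    (hRdef : ∀ u v : ℝ,
      R u v = 2 * M * kappa (α * β * Real.exp ((-α * u + β * v) / (4 * M))))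
    (U V : ℝ)
    (hdom : α * β * Real.exp ((-α * U + β * V) / (4 * M)) > -1) :
    DifferentiableAt ℝ (fun p : ℝ × ℝ => R p.1 p.2) (U, V) ∧
    R U V > 0 ∧
    HasDerivAt (fun v => R U v) (β / 2 * (1 - 2 * M / R U V)) V ∧
    HasDerivAt (fun u => R u V) (-(α / 2) * (1 - 2 * M / R U V)) U :=
  DNEF_radius_partial_derivatives_general M α β hM R hRdef U V hdom
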